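/- Let K be a field of characteristic ≠ 2 with [K^× : (K^×)²] = 2, let L = K(δ) with δ² ∈ K \ (K^×)² a quadratic extension, and let f be the nontrivial K-automorphism of L. Then the fixed-point subgroup C_{PSL₂(L)}(f) of the induced action of f on PSL₂(L) is isomorphic to PGL₂(K). -/

import Mathlib

open Matrix

variable (F : Type*) [Field F]

/-- `SL₂(F)`. -/
abbrev SL2 := Matrix.SpecialLinearGroup (Fin 2) F

/-- `PSL₂(F) = SL₂(F)/{±I}` (the center of `SL₂(F)`). -/
abbrev PSL2 := SL2 F ⧸ Subgroup.center (SL2 F)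

variable {F} in
/-- The diagonal matrix `diag(t, t⁻¹)` as an element of `SL₂(F)`. -/
def sl2diag (t : Fˣ) : SL2 F :=
  ⟨!![(t : F), 0; 0, ((t⁻¹ : Fˣ) : F)], by simp [Matrix.det_fin_two_of]⟩

variable {F} in
lemma center_le_comap (σ : F →+* F) :
    Subgroup.center (SL2 F) ≤
      Subgroup.comap (Matrix.SpecialLinearGroup.map σ) (Subgroup.center (SL2 F)) := by
  intro A hA
  rw [Subgroup.mem_comap, Matrix.SpecialLinearGroup.mem_center_iff] at *
  obtain ⟨r, hr, hrA⟩ := hA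
  refine ⟨σ r, by rw [← map_pow, hr, _root_.map_one], ?_⟩
  have : ((Matrix.SpecialLinearGroup.map σ A : SL2 F) : Matrix (Fin 2) (Fin 2) F)
      = (A : Matrix (Fin 2) (Fin 2) F).map σ := rfl
  rw [this, ← hrA]
  ext i j
  by_cases h : i = j <;>
    simp [Matrix.scalar_apply, Matrix.diagonal_apply, Matrix.map_apply, h]

variable {F} in
/-- The action of a field endomorphism `σ` of `F` on `PSL₂(F)`, induced by the
entrywise action on `SL₂(F)`. -/
def psl2Map (σ : F →+* F) : PSL2 F →* PSL2 F :=
  QuotientGroup.map _ _ (Matrix.SpecialLinearGroup.map σ) (center_le_comap σ)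

variable {F} in
/-- The fixed-point subgroup of a field endomorphism `σ` acting on `PSL₂(F)`. -/
def fixedPts (σ : F →+* F) : Subgroup (PSL2 F) where
  carrier := {x | psl2Map σ x = x}
  one_mem' := map_one _
  mul_mem' := by
    intro a b ha hb
    simp only [Set.mem_setOf_eq, _root_.map_mul] at *
    rw [ha, hb]
  inv_mem' := by
    intro a ha
    simp only [Set.mem_setOf_eq, _root_.map_inv] at *
    rw [ha]

/-- `PGL₂(F) = GL₂(F)` modulo its center (the scalar matrices). -/
abbrev PGL2 := GL (Fin 2) F ⧸ Subgroup.center (GL (Fin 2) F)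

/-!
Every `u ∈ Kˣ` is a square in `L`: either `u` is a square in `K`, or, the squares having index 2,
`u = t² δ²`. Choosing `s ∈ L` with `s² = det M` therefore gives a homomorphism
`GL₂(K) → PSL₂(L)`, `M ↦ ±s⁻¹ M`, whose kernel is the scalars. Its image is fixed by `f`, as
`f s = ±s`. Conversely, if `f A = ±A` then, since `f δ = -δ` and `L = K ⊕ Kδ`, either `A` or `δ A`
has all its entries in `K`, and in both cases `A = s⁻¹ M` for some `M ∈ GL₂(K)`.
-/

section QuadraticExtension

variable {K L : Type*} [Field K] [Field L] [Algebra K L] {δ : L} {c : K}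

theorem exists_eq_add_mul_of_mem_adjoin (hc : algebraMap K L c = δ ^ 2) {x : L}
    (hx : x ∈ Algebra.adjoin K {δ}) :
    ∃ a b : K, x = algebraMap K L a + algebraMap K L b * δ := by
  induction hx using Algebra.adjoin_induction with
  | mem x hx => exact ⟨0, 1, by simp [Set.mem_singleton_iff.1 hx]⟩
  | algebraMap r => exact ⟨r, 0, by simp⟩
  | add x y _ _ hx hy =>
    obtain ⟨a, b, rfl⟩ := hx
    obtain ⟨a', b', rfl⟩ := hy
    exact ⟨a + a', b + b', by simp only [map_add]; ring⟩
  | mul x y _ _ hx hy =>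
    obtain ⟨a, b, rfl⟩ := hx
    obtain ⟨a', b', rfl⟩ := hy
    exact ⟨a * a' + b * b' * c, a * b' + b * a', by simp only [map_add, map_mul, hc]; ring⟩

theorem apply_ne_self_of_ne_refl (hgen : Algebra.adjoin K {δ} = ⊤) {σ : L ≃ₐ[K] L}
    (hσ : σ ≠ AlgEquiv.refl) : σ δ ≠ δ := fun h =>
  hσ <| AlgEquiv.coe_toAlgHom_injective <|
    AlgHom.ext_of_adjoin_eq_top hgen (φ₂ := AlgHom.id K L) (by simpa using h)

theorem apply_eq_neg_of_ne_refl (hc : algebraMap K L c = δ ^ 2) (hgen : Algebra.adjoin K {δ} = ⊤)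
    {σ : L ≃ₐ[K] L} (hσ : σ ≠ AlgEquiv.refl) : σ δ = -δ := by
  have hsq : σ δ ^ 2 = δ ^ 2 := by rw [← map_pow, ← hc, AlgEquiv.commutes]
  exact (sq_eq_sq_iff_eq_or_eq_neg.1 hsq).resolve_left (apply_ne_self_of_ne_refl hgen hσ)

theorem mem_range_algebraMap_of_apply_eq_self (hc : algebraMap K L c = δ ^ 2)
    (hgen : Algebra.adjoin K {δ} = ⊤) {σ : L ≃ₐ[K] L} (hσδ : σ δ ≠ δ) {x : L} (hx : σ x = x) :
    x ∈ Set.range (algebraMap K L) := by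
  obtain ⟨a, b, rfl⟩ := exists_eq_add_mul_of_mem_adjoin hc (hgen ▸ Algebra.mem_top : x ∈ _)
  rw [map_add, map_mul, AlgEquiv.commutes, AlgEquiv.commutes, add_right_inj,
    mul_eq_mul_left_iff, or_iff_right hσδ] at hx
  exact ⟨a, by rw [hx, zero_mul, add_zero]⟩

theorem exists_sq_eq_algebraMap (hsq : ((powMonoidHom 2 : Kˣ →* Kˣ).range).index = 2)
    (hc : algebraMap K L c = δ ^ 2) (hcsq : ¬∃ y : K, y ^ 2 = c) (u : Kˣ) :
    ∃ s : L, s ^ 2 = algebraMap K L u := by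
  have not_mem : ∀ v : Kˣ, (¬∃ y : K, y ^ 2 = v) → v ∉ (powMonoidHom 2 : Kˣ →* Kˣ).range := by
    rintro v hv ⟨t, rfl⟩
    exact hv ⟨t, rfl⟩
  by_cases hu : ∃ y : K, y ^ 2 = u
  · obtain ⟨y, hy⟩ := hu
    exact ⟨algebraMap K L y, by rw [← map_pow, hy]⟩
  have hc0 : c ≠ 0 := by
    rintro rfl
    exact hcsq ⟨0, zero_pow two_ne_zero⟩
  obtain ⟨t, ht⟩ : u * (Units.mk0 c hc0)⁻¹ ∈ (powMonoidHom 2 : Kˣ →* Kˣ).range := by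
    rw [Subgroup.mul_mem_iff_of_index_two hsq, inv_mem_iff]
    exact iff_of_false (not_mem u hu) (not_mem _ hcsq)
  have htc : (t : K) ^ 2 * c = u := by
    simpa using congrArg Units.val (eq_mul_inv_iff_mul_eq.1 ht)
  exact ⟨algebraMap K L t * δ, by rw [mul_pow, ← hc, ← map_pow, ← map_mul, htc]⟩

end QuadraticExtension

section PSL2

variable {F}

theorem PSL2.mk_eq_mk_iff (A B : SL2 F) :
    (A : PSL2 F) = B ↔
      (A : Matrix (Fin 2) (Fin 2) F) = B ∨ (A : Matrix (Fin 2) (Fin 2) F) = -B := by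
  have hB : (B : Matrix (Fin 2) (Fin 2) F) =
      (A : Matrix (Fin 2) (Fin 2) F) * ((A⁻¹ * B : SL2 F) : Matrix (Fin 2) (Fin 2) F) := by
    rw [← Matrix.SpecialLinearGroup.coe_mul, mul_inv_cancel_left]
  rw [QuotientGroup.eq, Matrix.SpecialLinearGroup.mem_center_iff, Fintype.card_fin]
  constructor
  · rintro ⟨r, hr, hrAB⟩
    rw [← hrAB, scalar_apply, ← smul_one_eq_diagonal, mul_smul_comm, mul_one] at hB
    rcases sq_eq_sq_iff_eq_or_eq_neg.1 (hr.trans (one_pow 2).symm) with rfl | rfl <;> simp [hB]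
  · rintro (h | h)
    · obtain rfl : A = B := Subtype.ext h
      exact ⟨1, one_pow 2, by simp⟩
    · have hAB : ((A⁻¹ * B : SL2 F) : Matrix (Fin 2) (Fin 2) F) = -1 := by
        rw [Matrix.SpecialLinearGroup.coe_mul, ← neg_neg (B : Matrix (Fin 2) (Fin 2) F), ← h,
          mul_neg, ← Matrix.SpecialLinearGroup.coe_mul, inv_mul_cancel,
          Matrix.SpecialLinearGroup.coe_one]
      exact ⟨-1, by norm_num, by rw [hAB, map_neg, map_one]⟩

end PSL2

section ScaledSL2

variable {K L : Type*} [Field K] [Field L] [Algebra K L]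

theorem det_map_algebraMap {n : Type*} [Fintype n] [DecidableEq n] (N : Matrix n n K) :
    (N.map (algebraMap K L)).det = algebraMap K L N.det := by
  rw [RingHom.map_det, RingHom.mapMatrix_apply]

theorem ne_zero_of_sq_eq_det (M : GL (Fin 2) K) {s : L}
    (hs : s ^ 2 = algebraMap K L (M : Matrix (Fin 2) (Fin 2) K).det) : s ≠ 0 := by
  rintro rfl
  rw [zero_pow two_ne_zero, eq_comm, map_eq_zero_iff _ (algebraMap K L).injective,
    ← GeneralLinearGroup.val_det_apply] at hs
  exact Units.ne_zero _ hs

def scaledSL2 (M : GL (Fin 2) K) (s : L)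
    (hs : s ^ 2 = algebraMap K L (M : Matrix (Fin 2) (Fin 2) K).det) : SL2 L :=
  ⟨s⁻¹ • (M : Matrix (Fin 2) (Fin 2) K).map (algebraMap K L), by
    rw [det_smul, Fintype.card_fin, det_map_algebraMap, inv_pow, ← hs,
      inv_mul_cancel₀ (pow_ne_zero 2 (ne_zero_of_sq_eq_det M hs))]⟩

theorem coe_scaledSL2 (M : GL (Fin 2) K) (s : L) (hs) :
    (scaledSL2 M s hs : Matrix (Fin 2) (Fin 2) L) =
      s⁻¹ • (M : Matrix (Fin 2) (Fin 2) K).map (algebraMap K L) :=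
  rfl

theorem mk_scaledSL2_eq_mk_scaledSL2 (M : GL (Fin 2) K) {s t : L} (hs ht) :
    (scaledSL2 M s hs : PSL2 L) = scaledSL2 M t ht := by
  rw [PSL2.mk_eq_mk_iff, coe_scaledSL2, coe_scaledSL2]
  rcases sq_eq_sq_iff_eq_or_eq_neg.1 (hs.trans ht.symm) with rfl | rfl
  · exact Or.inl rfl
  · exact Or.inr (by rw [inv_neg, neg_smul])

theorem scaledSL2_mul (M N : GL (Fin 2) K) {s t : L} (hs ht) :
    scaledSL2 (M * N) (s * t) (by rw [Units.val_mul, det_mul, map_mul, mul_pow, hs, ht]) =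
      scaledSL2 M s hs * scaledSL2 N t ht := by
  ext : 1
  simp only [Matrix.SpecialLinearGroup.coe_mul, coe_scaledSL2, Units.val_mul, Matrix.map_mul,
    mul_inv, smul_mul_smul_comm]

theorem map_scaledSL2 (σ : L ≃ₐ[K] L) (M : GL (Fin 2) K) {s : L} (hs) :
    Matrix.SpecialLinearGroup.map (σ : L →+* L) (scaledSL2 M s hs) =
      scaledSL2 M (σ s) (by rw [← map_pow, hs, AlgEquiv.commutes]) := by
  ext i j
  simp [coe_scaledSL2]

variable (hroot : ∀ u : Kˣ, ∃ s : L, s ^ 2 = algebraMap K L u)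

/-- `M ↦ s⁻¹ M` with `s² = det M`; the choice of `s` only matters up to sign, which `PSL₂(L)`
forgets. -/
noncomputable def glToPSL2 : GL (Fin 2) K →* PSL2 L where
  toFun M := scaledSL2 M (hroot M.det).choose <| by
    rw [(hroot _).choose_spec, GeneralLinearGroup.val_det_apply]
  map_one' := by
    rw [mk_scaledSL2_eq_mk_scaledSL2 _ _ (t := 1) (by simp), ← QuotientGroup.mk_one]
    congr 1
    ext : 1
    simp [coe_scaledSL2]
  map_mul' M N := by
    rw [← QuotientGroup.mk_mul, ← scaledSL2_mul]
    exact mk_scaledSL2_eq_mk_scaledSL2 _ _ _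

theorem glToPSL2_apply (M : GL (Fin 2) K) {s : L} (hs) :
    glToPSL2 hroot M = scaledSL2 M s hs :=
  mk_scaledSL2_eq_mk_scaledSL2 _ _ _

theorem ker_glToPSL2 : (glToPSL2 hroot).ker = Subgroup.center (GL (Fin 2) K) := by
  ext M
  rw [MonoidHom.mem_ker]
  constructor
  · obtain ⟨s, hs⟩ := hroot M.det
    rw [GeneralLinearGroup.val_det_apply] at hs
    rw [glToPSL2_apply hroot M hs, ← QuotientGroup.mk_one, PSL2.mk_eq_mk_iff, coe_scaledSL2,
      Matrix.SpecialLinearGroup.coe_one]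
    intro h
    have hs0 := ne_zero_of_sq_eq_det M hs
    obtain ⟨u, hu⟩ : ∃ u : L, (M : Matrix (Fin 2) (Fin 2) K).map (algebraMap K L) = u • 1 := by
      rcases h with h | h
      · exact ⟨s, by rw [← h, smul_inv_smul₀ hs0]⟩
      · exact ⟨-s, by rw [neg_smul, ← smul_neg, ← h, smul_inv_smul₀ hs0]⟩
    refine Subgroup.mem_center_iff.2 fun N =>
      Units.ext <| Matrix.map_injective (algebraMap K L).injective ?_
    simp only [Units.val_mul, Matrix.map_mul, hu, smul_mul_assoc, mul_smul_comm, one_mul, mul_one]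
  · intro hM
    obtain ⟨r, hr⟩ := GeneralLinearGroup.mem_center_iff_val_mem_range_scalar.1 hM
    have hs : algebraMap K L r ^ 2 = algebraMap K L (M : Matrix (Fin 2) (Fin 2) K).det := by
      rw [← hr]
      simp [sq]
    rw [glToPSL2_apply hroot M hs, ← QuotientGroup.mk_one]
    congr 1
    have hr0 := ne_zero_of_sq_eq_det M hs
    ext i j
    by_cases hij : i = j <;> simp [coe_scaledSL2, ← hr, one_apply, hr0, hij]

theorem range_glToPSL2_le_fixedPts (σ : L ≃ₐ[K] L) :
    (glToPSL2 hroot).range ≤ fixedPts (σ : L →+* L) := by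
  rintro _ ⟨M, rfl⟩
  obtain ⟨s, hs⟩ := hroot M.det
  rw [GeneralLinearGroup.val_det_apply] at hs
  change psl2Map (σ : L →+* L) _ = _
  rw [glToPSL2_apply hroot M hs, psl2Map, QuotientGroup.map_mk, map_scaledSL2]
  exact mk_scaledSL2_eq_mk_scaledSL2 _ _ _

theorem mk_mem_range_glToPSL2_of_map_eq_smul (A : SL2 L) {u : L} (hu : u ≠ 0)
    (N : Matrix (Fin 2) (Fin 2) K)
    (hN : N.map (algebraMap K L) = u • (A : Matrix (Fin 2) (Fin 2) L)) :
    (A : PSL2 L) ∈ (glToPSL2 hroot).range := by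
  have hdet : algebraMap K L N.det = u ^ 2 := by
    rw [← det_map_algebraMap, hN, det_smul, A.2, Fintype.card_fin, mul_one]
  have hN0 : N.det ≠ 0 := by
    intro h
    rw [h, map_zero] at hdet
    exact pow_ne_zero 2 hu hdet.symm
  refine ⟨GeneralLinearGroup.mkOfDetNeZero N hN0, ?_⟩
  rw [glToPSL2_apply hroot _ hdet.symm]
  congr 1
  apply Subtype.ext
  change u⁻¹ • N.map (algebraMap K L) = _
  rw [hN, inv_smul_smul₀ hu]

theorem exists_map_eq_of_map_eq_self {m n : Type*} (σ : L ≃ₐ[K] L)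
    (hfix : ∀ x, σ x = x → x ∈ Set.range (algebraMap K L)) (B : Matrix m n L) (hB : B.map σ = B) :
    ∃ N : Matrix m n K, N.map (algebraMap K L) = B := by
  choose N hN using fun i j => hfix (B i j) (congrFun (congrFun hB i) j)
  exact ⟨Matrix.of N, by ext i j; exact hN i j⟩

theorem fixedPts_le_range_glToPSL2 (σ : L ≃ₐ[K] L)
    (hfix : ∀ x, σ x = x → x ∈ Set.range (algebraMap K L)) {δ : L} (hδ0 : δ ≠ 0)
    (hσδ : σ δ = -δ) : fixedPts (σ : L →+* L) ≤ (glToPSL2 hroot).range := by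
  intro x hx
  obtain ⟨A, rfl⟩ := QuotientGroup.mk_surjective x
  have hA : psl2Map (σ : L →+* L) A = A := hx
  rw [psl2Map, QuotientGroup.map_mk, PSL2.mk_eq_mk_iff] at hA
  change (A : Matrix (Fin 2) (Fin 2) L).map σ = A ∨ (A : Matrix (Fin 2) (Fin 2) L).map σ = -A
    at hA
  rcases hA with h | h
  · obtain ⟨N, hN⟩ := exists_map_eq_of_map_eq_self σ hfix _ h
    exact mk_mem_range_glToPSL2_of_map_eq_smul hroot A one_ne_zero N (by rw [hN, one_smul])
  · obtain ⟨N, hN⟩ :=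
        exists_map_eq_of_map_eq_self σ hfix (δ • (A : Matrix (Fin 2) (Fin 2) L)) <| by
      rw [Matrix.map_smul' _ _ _ (map_mul σ), h, hσδ, neg_smul_neg]
    exact mk_mem_range_glToPSL2_of_map_eq_smul hroot A hδ0 N hN

end ScaledSL2

theorem stmt16_general {K L : Type*} [Field K] [Field L] [Algebra K L]
    (hsq : ((powMonoidHom 2 : Kˣ →* Kˣ).range).index = 2)
    (f : L ≃ₐ[K] L) (hf : f ≠ AlgEquiv.refl)
    (δ : Lˣ) (hδK : ∃ c : K, algebraMap K L c = (δ : L) ^ 2 ∧ ¬ ∃ y : K, y ^ 2 = c)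
    (hgen : Algebra.adjoin K {(δ : L)} = ⊤) :
    Nonempty (fixedPts (f : L →+* L) ≃* PGL2 K) := by
  obtain ⟨c, hc, hcsq⟩ := hδK
  have hroot := exists_sq_eq_algebraMap hsq hc hcsq
  have hfix : ∀ x, f x = x → x ∈ Set.range (algebraMap K L) := fun _ =>
    mem_range_algebraMap_of_apply_eq_self hc hgen (apply_ne_self_of_ne_refl hgen hf)
  have hrange : (glToPSL2 hroot).range = fixedPts (f : L →+* L) :=
    le_antisymm (range_glToPSL2_le_fixedPts hroot f)
      (fixedPts_le_range_glToPSL2 hroot f hfix δ.ne_zero (apply_eq_neg_of_ne_refl hc hgen hf))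
  exact ⟨(MulEquiv.subgroupCongr hrange).symm.trans <|
    (QuotientGroup.quotientKerEquivRange _).symm.trans <|
      QuotientGroup.quotientMulEquivOfEq (ker_glToPSL2 hroot)⟩

/-- Let `K` be a field of characteristic ≠ 2 with `[K^× : (K^×)²] = 2`,
let `L = K(δ)` be a quadratic extension with `δ² ∈ K \ (K^×)²`, and let `f` be the
nontrivial `K`-automorphism of `L`. Then the fixed-point subgroup `C_{PSL₂(L)}(f)` of
the induced action of `f` on `PSL₂(L)` is isomorphic to `PGL₂(K)`. -/
theorem stmt16 {K L : Type*} [Field K] [Field L] [Algebra K L]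
    (hchar : ringChar K ≠ 2)
    (hsq : ((powMonoidHom 2 : Kˣ →* Kˣ).range).index = 2)
    (hdim : Module.finrank K L = 2)
    (f : L ≃ₐ[K] L) (hf : f ≠ AlgEquiv.refl)
    (δ : Lˣ) (hδK : ∃ c : K, algebraMap K L c = (δ : L) ^ 2 ∧ ¬ ∃ y : K, y ^ 2 = c)
    (hgen : Algebra.adjoin K {(δ : L)} = ⊤) :
    Nonempty (fixedPts (f : L →+* L) ≃* PGL2 K) :=
  stmt16_general hsq f hf δ hδK hgen
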